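/- In the ring R = ℤ[y,z] / (y² − y³ − z − 2z² − y²z² − z³ − yz³), the sum of the ideals (y, z+1) and (y−4, z+3) equals the ideal (2, y, z+1). Moreover, the quotient R / (2, y, z+1) is isomorphic to the field 𝔽₂ with two elements. -/
import Mathlib


open MvPolynomial

noncomputable abbrev yQ : MvPolynomial (Fin 2) ℤ := X 0
noncomputable abbrev zQ : MvPolynomial (Fin 2) ℤ := X 1

/-- Defining equation of the affine patch `X ≠ 0` of the quartic
`X²Y² − XY³ − X³Z − 2X²Z² + Y²Z² − XZ³ + YZ³ = 0`. -/
noncomputable abbrev f12 : MvPolynomial (Fin 2) ℤ :=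
  yQ ^ 2 - yQ ^ 3 - zQ - 2 * zQ ^ 2 - yQ ^ 2 * zQ ^ 2 - zQ ^ 3 - yQ * zQ ^ 3

noncomputable abbrev mkQ : MvPolynomial (Fin 2) ℤ →+*
    MvPolynomial (Fin 2) ℤ ⧸ Ideal.span {f12} :=
  Ideal.Quotient.mk (Ideal.span {f12})

lemma sub_eval_mem (v : Fin 2 → ℤ) (p : MvPolynomial (Fin 2) ℤ) :
    p - C (eval v p) ∈ Ideal.span {(X 0 - C (v 0) : MvPolynomial (Fin 2) ℤ), X 1 - C (v 1)} := by
  induction p using MvPolynomial.induction_on with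
  | C a => simp
  | add p q hp hq =>
      have h := Ideal.add_mem _ hp hq
      have : p + q - C (eval v (p + q)) = (p - C (eval v p)) + (q - C (eval v q)) := by
        rw [map_add, map_add]; ring
      rw [this]; exact h
  | mul_X p i hp =>
      have h1 : p * X i - C (eval v (p * X i)) =
          (X i - C (v i)) * p + C (v i) * (p - C (eval v p)) := by
        rw [eval_mul, eval_X, map_mul]; ring
      rw [h1]
      refine Ideal.add_mem _ (Ideal.mul_mem_right _ _ ?_) (Ideal.mul_mem_left _ _ hp)
      fin_cases i
      · exact Ideal.subset_span (by simp)
      · exact Ideal.subset_span (by simp)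

noncomputable abbrev vv : Fin 2 → ℤ := fun i => if i = 0 then 0 else -1

lemma sub_eval_mem' (p : MvPolynomial (Fin 2) ℤ) :
    p - C (eval vv p) ∈ Ideal.span {yQ, zQ + 1} := by
  have h := sub_eval_mem vv p
  have e0 : (X 0 - C (vv 0) : MvPolynomial (Fin 2) ℤ) = yQ := by simp [vv]
  have e1 : (X 1 - C (vv 1) : MvPolynomial (Fin 2) ℤ) = zQ + 1 := by
    simp [vv, sub_neg_eq_add]
  rwa [e0, e1] at h

noncomputable abbrev I3 : Ideal (MvPolynomial (Fin 2) ℤ) := Ideal.span {2, yQ, zQ + 1}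

noncomputable abbrev φ : MvPolynomial (Fin 2) ℤ →+* ZMod 2 :=
  eval₂Hom (Int.castRingHom (ZMod 2)) (fun i => if i = 0 then 0 else 1)

lemma phi_eq (p : MvPolynomial (Fin 2) ℤ) : φ p = ((eval vv p : ℤ) : ZMod 2) := by
  have h := eval₂_comp_left (Int.castRingHom (ZMod 2)) (RingHom.id ℤ) vv p
  have hg : (Int.castRingHom (ZMod 2)) ∘ vv =
      fun i : Fin 2 => if i = 0 then (0 : ZMod 2) else 1 := by
    funext i
    fin_cases i <;> simp [vv] <;> decide
  have h0 : ((eval vv p : ℤ) : ZMod 2) = (Int.castRingHom (ZMod 2)) (eval₂ (RingHom.id ℤ) vv p) := rfl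
  rw [h0, h, RingHom.comp_id, hg]
  rfl

lemma span_yz_le : Ideal.span {yQ, zQ + 1} ≤ I3 := by
  rw [Ideal.span_le]
  intro x hx
  rcases hx with h | h
  · exact Ideal.subset_span (by simp [h])
  · simp only [Set.mem_singleton_iff] at h
    exact Ideal.subset_span (by simp [h])

lemma ker_phi : RingHom.ker φ = I3 := by
  apply le_antisymm
  · intro p hp
    rw [RingHom.mem_ker] at hp
    have h1 : p - C (eval vv p) ∈ I3 := span_yz_le (sub_eval_mem' p)
    have h2 : ((eval vv p : ℤ) : ZMod 2) = 0 := by rw [← phi_eq]; exact hp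
    rw [ZMod.intCast_zmod_eq_zero_iff_dvd] at h2
    obtain ⟨m, hm⟩ := h2
    have h3 : (C (eval vv p) : MvPolynomial (Fin 2) ℤ) = 2 * C m := by
      rw [hm, map_mul]; norm_num
    have h4 : (C (eval vv p) : MvPolynomial (Fin 2) ℤ) ∈ I3 := by
      rw [h3]
      exact Ideal.mul_mem_right _ _ (Ideal.subset_span (by simp))
    have := Ideal.add_mem _ h1 h4
    simpa using this
  · rw [Ideal.span_le]
    intro x hx
    rcases hx with h | h | h
    · subst h
      simp only [SetLike.mem_coe, RingHom.mem_ker, map_ofNat]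
      decide
    · subst h; simp [RingHom.mem_ker]
    · simp only [Set.mem_singleton_iff] at h
      subst h
      simp only [SetLike.mem_coe, RingHom.mem_ker, map_add, map_one]
      rw [show φ zQ = 1 by simp]
      decide

lemma phi_surj : Function.Surjective φ := by
  intro b
  obtain ⟨k, hk⟩ := ZMod.intCast_surjective (n := 2) b
  exact ⟨C k, by simp [hk]⟩

lemma f12_mem : f12 ∈ I3 := by
  apply span_yz_le
  rw [Ideal.mem_span_pair]
  exact ⟨yQ - yQ^2 - yQ*zQ^2 - zQ^3, -zQ*(zQ+1), by ring⟩

/-- In `R = ℤ[y,z]/(y² − y³ − z − 2z² − y²z² − z³ − yz³)`, one has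
`(y, z+1) + (y−4, z+3) = (2, y, z+1)` and `R/(2, y, z+1) ≅ 𝔽₂`. -/
theorem ideal_sum_and_quotient :
    (Ideal.span ({mkQ yQ, mkQ (zQ + 1)} :
        Set (MvPolynomial (Fin 2) ℤ ⧸ Ideal.span {f12})) ⊔
      Ideal.span {mkQ (yQ - 4), mkQ (zQ + 3)} =
      Ideal.span {mkQ 2, mkQ yQ, mkQ (zQ + 1)}) ∧
    Nonempty (((MvPolynomial (Fin 2) ℤ ⧸ Ideal.span {f12}) ⧸
        Ideal.span {mkQ 2, mkQ yQ, mkQ (zQ + 1)}) ≃+* ZMod 2) := by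
  constructor
  · apply le_antisymm
    · apply sup_le <;> rw [Ideal.span_le] <;> intro x hx
      · rcases hx with h | h
        · exact Ideal.subset_span (by simp [h])
        · simp only [Set.mem_singleton_iff] at h
          exact Ideal.subset_span (by simp [h])
      · rcases hx with h | h
        · subst h
          have : mkQ (yQ - 4) = mkQ yQ - mkQ 2 * mkQ 2 := by
            rw [show (yQ - 4 : MvPolynomial (Fin 2) ℤ) = yQ - 2 * 2 by ring, map_sub, map_mul]
          rw [this]
          exact sub_mem (Ideal.subset_span (by simp))
            (Ideal.mul_mem_left _ _ (Ideal.subset_span (by simp)))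
        · simp only [Set.mem_singleton_iff] at h
          subst h
          have : mkQ (zQ + 3) = mkQ (zQ + 1) + mkQ 2 := by
            rw [← map_add]; ring_nf
          rw [this]
          exact add_mem (Ideal.subset_span (by simp)) (Ideal.subset_span (by simp))
    · rw [Ideal.span_le]
      intro x hx
      rcases hx with h | h | h
      · subst h
        have : mkQ 2 = mkQ (zQ + 3) - mkQ (zQ + 1) := by
          rw [← map_sub]; ring_nf
        rw [this]
        exact sub_mem
          (Ideal.mem_sup_right (Ideal.subset_span (by simp)))
          (Ideal.mem_sup_left (Ideal.subset_span (by simp)))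
      · exact Ideal.mem_sup_left (Ideal.subset_span (by simp [h]))
      · simp only [Set.mem_singleton_iff] at h
        exact Ideal.mem_sup_left (Ideal.subset_span (by simp [h]))
  · have hmap : Ideal.span ({mkQ 2, mkQ yQ, mkQ (zQ + 1)} :
        Set (MvPolynomial (Fin 2) ℤ ⧸ Ideal.span {f12})) =
        I3.map (Ideal.Quotient.mk (Ideal.span {f12})) := by
      rw [Ideal.map_span]
      congr 1
      rw [Set.image_insert_eq, Set.image_insert_eq, Set.image_singleton]
    rw [hmap]
    have hsup : Ideal.span {f12} ⊔ I3 = I3 := sup_eq_right.mpr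
      ((Ideal.span_le).mpr (by simpa using f12_mem))
    exact ⟨((DoubleQuot.quotQuotEquivQuotSup (Ideal.span {f12}) I3).trans
      (Ideal.quotEquivOfEq (hsup.trans ker_phi.symm))).trans
      (RingHom.quotientKerEquivOfSurjective phi_surj)⟩
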